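/- For every β ∈ ℝ, setting H(x,y,z) = (1/4)(−x² + y²) − βz and C(x,y,z) = (1/2)(x² + y²) + z², the Rikitake vector field X(x,y,z) = (yz + βy, xz − βx, −xy) satisfies X(x,y,z) = ∇H(x,y,z) × ∇C(x,y,z) for all (x,y,z) ∈ ℝ³; consequently H and C are first integrals of the conservative Rikitake system (x' = yz + βy, y' = xz − βx, z' = −xy), i.e., they are constant along all its differentiable solutions. -/

import Mathlib

open scoped RealInnerProductSpace

noncomputable section

abbrev E3 := EuclideanSpace ℝ (Fin 3)

/-- The cross product on `EuclideanSpace ℝ (Fin 3)`. -/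
noncomputable def cross3 (a b : E3) : E3 :=
  (WithLp.equiv 2 (Fin 3 → ℝ)).symm
    (crossProduct (WithLp.equiv 2 (Fin 3 → ℝ) a) (WithLp.equiv 2 (Fin 3 → ℝ) b))

/-! Along a solution `γ` of `u' = V u`, the chain rule gives `(f ∘ γ)' = ⟪∇f, V⟫`, which vanishes
when `V = ∇H × ∇C` and `f` is `H` or `C`, since a cross product is orthogonal to both factors.
The identity `X = ∇H × ∇C` itself is a coordinate computation with `∇H = (-x/2, y/2, -β)` and
`∇C = (x, y, 2z)`. -/

def rikitakeH (β : ℝ) (u : E3) : ℝ := (1 / 4) * (-(u 0) ^ 2 + (u 1) ^ 2) - β * u 2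

def rikitakeC (u : E3) : ℝ := (1 / 2) * ((u 0) ^ 2 + (u 1) ^ 2) + (u 2) ^ 2

lemma inner_cross3_self_left (a b : E3) : ⟪a, cross3 a b⟫ = 0 := by
  rw [EuclideanSpace.inner_eq_star_dotProduct, cross3, star_trivial, dotProduct_comm]
  exact dot_self_cross _ _

lemma inner_cross3_self_right (a b : E3) : ⟪b, cross3 a b⟫ = 0 := by
  rw [EuclideanSpace.inner_eq_star_dotProduct, cross3, star_trivial, dotProduct_comm]
  exact dot_cross_self _ _

lemma hasGradientAt_rikitakeH (β : ℝ) (u : E3) :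
    HasGradientAt (rikitakeH β) (WithLp.toLp 2 ![-(1 / 2) * u 0, (1 / 2) * u 1, -β]) u := by
  have d := fun i : Fin 3 => PiLp.hasFDerivAt_apply (𝕜 := ℝ) 2 u i
  refine ((((d 0).pow 2).neg.add ((d 1).pow 2)).const_mul (1 / 4 : ℝ)).sub
    ((d 2).const_mul β) |>.congr_fderiv ?_
  ext v
  simp only [InnerProductSpace.toDual_apply_apply, PiLp.inner_apply, RCLike.inner_apply,
    Real.ringHom_apply, Fin.sum_univ_three, sub_apply, add_apply, neg_apply, smul_apply,
    PiLp.proj_apply, smul_eq_mul, nsmul_eq_mul, Nat.add_one_sub_one, pow_one,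
    Matrix.cons_val_zero, Matrix.cons_val_one, Matrix.cons_val]
  ring

lemma hasGradientAt_rikitakeC (u : E3) :
    HasGradientAt rikitakeC (WithLp.toLp 2 ![u 0, u 1, 2 * u 2]) u := by
  have d := fun i : Fin 3 => PiLp.hasFDerivAt_apply (𝕜 := ℝ) 2 u i
  refine ((((d 0).pow 2).add ((d 1).pow 2)).const_mul (1 / 2 : ℝ)).add
    ((d 2).pow 2) |>.congr_fderiv ?_
  ext v
  simp only [InnerProductSpace.toDual_apply_apply, PiLp.inner_apply, RCLike.inner_apply,
    Real.ringHom_apply, Fin.sum_univ_three, add_apply, smul_apply, PiLp.proj_apply, smul_eq_mul,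
    nsmul_eq_mul, Nat.add_one_sub_one, pow_one, Matrix.cons_val_zero, Matrix.cons_val_one,
    Matrix.cons_val]
  ring

theorem comp_eq_of_forall_inner_gradient_eq_zero {F : Type*} [NormedAddCommGroup F]
    [InnerProductSpace ℝ F] [CompleteSpace F] {f : F → ℝ} {g V : F → F} {γ : ℝ → F}
    (hf : ∀ u, HasGradientAt f (g u) u) (hγ : ∀ t, HasDerivAt γ (V (γ t)) t)
    (horth : ∀ u, ⟪g u, V u⟫ = 0) (s t : ℝ) : f (γ s) = f (γ t) := by
  have hderiv : ∀ t, HasDerivAt (f ∘ γ) 0 t := fun t => by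
    simpa [horth] using (hf (γ t)).hasFDerivAt.comp_hasDerivAt t (hγ t)
  exact is_const_of_deriv_eq_zero (fun t => (hderiv t).differentiableAt)
    (fun t => (hderiv t).deriv) s t

/-- For every `β ∈ ℝ`, with `H(x,y,z) = (1/4)(−x² + y²) − βz` and
`C(x,y,z) = (1/2)(x² + y²) + z²`, the Rikitake vector field
`X(x,y,z) = (yz + βy, xz − βx, −xy)` satisfies `X = ∇H × ∇C`; consequently `H` and
`C` are first integrals of the conservative Rikitake system, i.e. they are constant
along all its differentiable solutions. -/
theorem stmt_16 (β : ℝ) (H C : E3 → ℝ)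
    (hH : ∀ u : E3, H u = (1 / 4) * (-(u 0) ^ 2 + (u 1) ^ 2) - β * u 2)
    (hC : ∀ u : E3, C u = (1 / 2) * ((u 0) ^ 2 + (u 1) ^ 2) + (u 2) ^ 2)
    (X : E3 → E3)
    (hX : ∀ u : E3, X u = (WithLp.equiv 2 (Fin 3 → ℝ)).symm
      ![u 1 * u 2 + β * u 1, u 0 * u 2 - β * u 0, -(u 0 * u 1)]) :
    (∀ u : E3, X u = cross3 (gradient H u) (gradient C u)) ∧
    (∀ γ : ℝ → E3, (∀ t, HasDerivAt γ (X (γ t)) t) →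
      ∀ s t : ℝ, H (γ s) = H (γ t) ∧ C (γ s) = C (γ t)) := by
  obtain rfl : H = rikitakeH β := funext hH
  obtain rfl : C = rikitakeC := funext hC
  have hXcross (u : E3) : X u = cross3 (gradient (rikitakeH β) u) (gradient rikitakeC u) := by
    rw [hX, (hasGradientAt_rikitakeH β u).gradient, (hasGradientAt_rikitakeC u).gradient]
    ext i
    fin_cases i <;> simp only [cross3, cross_apply, WithLp.equiv_apply,
      WithLp.equiv_symm_apply, Fin.zero_eta, Fin.mk_one, Fin.reduceFinMk, Matrix.cons_val_zero,
      Matrix.cons_val_one, Matrix.cons_val] <;> ring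
  refine ⟨hXcross, fun γ hγ s t => ⟨?_, ?_⟩⟩
  · exact comp_eq_of_forall_inner_gradient_eq_zero
      (fun u => (hasGradientAt_rikitakeH β u).differentiableAt.hasGradientAt) hγ
      (fun u => hXcross u ▸ inner_cross3_self_left _ _) s t
  · exact comp_eq_of_forall_inner_gradient_eq_zero
      (fun u => (hasGradientAt_rikitakeC u).differentiableAt.hasGradientAt) hγ
      (fun u => hXcross u ▸ inner_cross3_self_right _ _) s t
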